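/- Let F = (f_ω)_{ω ∈ ∂B} be a border basis for B connected to 1 with commuting multiplication operators, and Ξ the module of commutation syzygies. If m·θ = m'·θ' with θ, θ' ∈ ∂B and m, m' monomials, then m e_θ ≡ m' e_{θ'} + Σ_{ω ∈ ∂B} p_ω e_ω (mod Ξ) for some polynomials p_ω of total degree < max(|m|, |m'|). -/

import Mathlib

open MvPolynomial
open scoped Classical

abbrev Mon (n : ℕ) := Fin n →₀ ℕ

def prolong {n : ℕ} (B : Set (Mon n)) : Set (Mon n) :=
  B ∪ ⋃ i : Fin n, (fun m => Finsupp.single i 1 + m) '' B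

def border {n : ℕ} (B : Set (Mon n)) : Set (Mon n) := prolong B \ B

noncomputable def varsSum {n : ℕ} (L : List (Fin n)) : Mon n :=
  (L.map fun i => Finsupp.single i 1).sum

def ConnectedTo1 {n : ℕ} (B : Set (Mon n)) : Prop :=
  0 ∈ B ∧ ∀ m ∈ B, ∃ L : List (Fin n), varsSum L = m ∧
    ∀ L' : List (Fin n), L' <+: L → varsSum L' ∈ B

def degSum {n : ℕ} (m : Mon n) : ℕ := m.sum fun _ e => e
noncomputable def spanMon {n : ℕ} (K : Type) [Field K] (B : Set (Mon n)) :
    Submodule K (MvPolynomial (Fin n) K) :=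
  Submodule.span K ((fun m => (monomial m (1 : K) : MvPolynomial (Fin n) K)) '' B)

noncomputable def piF {n : ℕ} {K : Type} [Field K] (B H : Set (Mon n))
    (ρ : Mon n → MvPolynomial (Fin n) K) (p : MvPolynomial (Fin n) K) :
    MvPolynomial (Fin n) K :=
  p.support.sum fun m =>
    if m ∈ B then monomial m (p.coeff m)
    else if m ∈ H then p.coeff m • ρ m else 0

noncomputable def redList {n : ℕ} {K : Type} [Field K] (B H : Set (Mon n))
    (ρ : Mon n → MvPolynomial (Fin n) K) : List (Fin n) → MvPolynomial (Fin n) K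
  | [] => 1
  | i :: L => piF B H ρ (X i * redList B H ρ L)

def DefinedOn {n : ℕ} {K : Type} [Field K] (B H : Set (Mon n))
    (p : MvPolynomial (Fin n) K) : Prop :=
  ↑p.support ⊆ B ∪ H

def RedDefined {n : ℕ} {K : Type} [Field K] (B H : Set (Mon n))
    (ρ : Mon n → MvPolynomial (Fin n) K) : List (Fin n) → Prop
  | [] => True
  | i :: L => RedDefined B H ρ L ∧ DefinedOn B H (X i * redList B H ρ L)

def Eset {n : ℕ} {K : Type} [Field K] (B H : Set (Mon n))
    (ρ : Mon n → MvPolynomial (Fin n) K) : Set (Mon n) :=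
  { m | ∀ L : List (Fin n), varsSum L = m → RedDefined B H ρ L }

/-- μ^i(q) ∈ K[x]^(∂B): the vector of coefficients μ^i_{q,ω} = coeff_ω(x_i·q)
    (for q ∈ ⟨B⟩) expressing x_i·q − π_F(x_i·q) = Σ_ω μ^i_{q,ω} f_ω. -/
noncomputable def muF {n : ℕ} {K : Type} [Field K] (B : Set (Mon n)) (i : Fin n)
    (q : MvPolynomial (Fin n) K) : Mon n →₀ MvPolynomial (Fin n) K :=
  ∑ ω ∈ (X i * q).support,
    if ω ∈ border B then
      Finsupp.single ω (C ((X i * q).coeff ω) : MvPolynomial (Fin n) K)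
    else 0

/-- The generators of the module Ξ of commutation syzygies:
    x_{i₁} μ^{i₂}(m) + μ^{i₁}(x_{i₂}m) − x_{i₂} μ^{i₁}(m) − μ^{i₂}(x_{i₁}m), m ∈ B. -/
noncomputable def XiGen {n : ℕ} {K : Type} [Field K] (B : Set (Mon n))
    (ρ : Mon n → MvPolynomial (Fin n) K) :
    Set (Mon n →₀ MvPolynomial (Fin n) K) :=
  { v | ∃ m ∈ B, ∃ i1 i2 : Fin n,
    v = (X i1 : MvPolynomial (Fin n) K) • muF B i2 (monomial m (1 : K))
      + muF B i1 (piF B (border B) ρ (X i2 * monomial m (1 : K)))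
      - (X i2 : MvPolynomial (Fin n) K) • muF B i1 (monomial m (1 : K))
      - muF B i2 (piF B (border B) ρ (X i1 * monomial m (1 : K))) }

/-!
Reduce `x^L q` with the border basis one letter of the word `L` at a time: this produces a normal
form `redWord q L` and a coefficient vector `syzWord q L`. Swapping two adjacent letters leaves the
normal form unchanged (the multiplication operators commute) and changes the vector by exactly a
generator of Ξ, so permuted words have vectors congruent modulo Ξ. A word for `m θ` that first
builds `θ = x_j b` along a path from `1` to `b` inside `B` and then multiplies by `m` has vector
`m e_θ` plus the vector of the reduction of `m ρ_θ`, whose entries have degree `< |m|`. Comparing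
two such words for `m θ = m' θ'` gives the claim.
-/

lemma MvPolynomial.totalDegree_sub_lt {σ R : Type*} [CommRing R] {p q : MvPolynomial σ R}
    {d : ℕ} (hp : p ≠ 0 → p.totalDegree < d) (hq : q ≠ 0 → q.totalDegree < d)
    (hpq : p - q ≠ 0) : (p - q).totalDegree < d := by
  have hd : 0 < d := by
    by_cases h : p = 0
    · exact Nat.zero_lt_of_lt (hq fun hq0 => hpq (by simp [h, hq0]))
    · exact Nat.zero_lt_of_lt (hp h)
  have hlt : ∀ r : MvPolynomial σ R, (r ≠ 0 → r.totalDegree < d) → r.totalDegree < d :=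
    fun r hr => (eq_or_ne r 0).elim (fun h => h ▸ by simpa using hd) hr
  exact (totalDegree_sub p q).trans_lt (max_lt (hlt p hp) (hlt q hq))

section BorderBasis

variable {n : ℕ} {K : Type} [Field K]

lemma varsSum_eq_toFinsupp (L : List (Fin n)) :
    varsSum L = Multiset.toFinsupp (L : Multiset (Fin n)) := by
  induction L with
  | nil => rfl
  | cons i L ih =>
    rw [← Multiset.cons_coe, ← Multiset.singleton_add, Multiset.toFinsupp_add,
      Multiset.toFinsupp_singleton, ← ih]
    simp [varsSum]

lemma varsSum_cons (i : Fin n) (L : List (Fin n)) :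
    varsSum (i :: L) = Finsupp.single i 1 + varsSum L := by
  simp [varsSum]

lemma varsSum_append (L M : List (Fin n)) : varsSum (L ++ M) = varsSum L + varsSum M := by
  simp [varsSum]

lemma varsSum_reverse (L : List (Fin n)) : varsSum L.reverse = varsSum L := by
  simp [varsSum_eq_toFinsupp]

lemma List.Perm.of_varsSum_eq {L L' : List (Fin n)} (h : varsSum L = varsSum L') :
    L.Perm L' := by
  rw [varsSum_eq_toFinsupp, varsSum_eq_toFinsupp] at h
  exact Multiset.coe_eq_coe.mp (Multiset.toFinsupp.injective h)

lemma exists_varsSum_eq (m : Mon n) :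
    ∃ L : List (Fin n), varsSum L = m ∧ L.length = degSum m := by
  refine ⟨(Finsupp.toMultiset m).toList, ?_, ?_⟩
  · simp [varsSum_eq_toFinsupp]
  · simp [degSum, Finsupp.card_toMultiset]; rfl

lemma X_mul_monomial_one (i : Fin n) (b : Mon n) :
    (X i * monomial b 1 : MvPolynomial (Fin n) K) = monomial (Finsupp.single i 1 + b) 1 := by
  rw [monomial_single_add, pow_one]

lemma spanMon_eq_restrictSupport (B : Set (Mon n)) : spanMon K B = restrictSupport K B :=
  (restrictSupport_eq_span K B).symm

lemma one_mem_spanMon {B : Set (Mon n)} (h0 : 0 ∈ B) :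
    (1 : MvPolynomial (Fin n) K) ∈ spanMon K B := by
  rw [spanMon_eq_restrictSupport, ← C_1, ← monomial_zero']
  exact (monomial_mem_restrictSupport K).mpr (.inl h0)

variable (B H : Set (Mon n)) (ρ : Mon n → MvPolynomial (Fin n) K)

lemma piF_eq_sum (p : MvPolynomial (Fin n) K) :
    piF B H ρ p = (AddMonoidAlgebra.coeff p).sum fun m c =>
      if m ∈ B then monomial m c else if m ∈ H then c • ρ m else 0 := rfl

lemma piF_add (p q : MvPolynomial (Fin n) K) :
    piF B H ρ (p + q) = piF B H ρ p + piF B H ρ q := by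
  simp only [piF_eq_sum]
  refine Finsupp.sum_add_index' (fun m => ?_) (fun m a b => ?_) <;> split_ifs <;>
    simp [add_smul]

lemma piF_smul (c : K) (p : MvPolynomial (Fin n) K) :
    piF B H ρ (c • p) = c • piF B H ρ p := by
  simp only [piF_eq_sum]
  rw [Finsupp.smul_sum]
  refine (Finsupp.sum_smul_index' fun m => ?_).trans (Finsupp.sum_congr fun m _ => ?_) <;>
    split_ifs <;> simp [smul_monomial, smul_smul]

lemma piF_mem_spanMon (hρ : ∀ ω ∈ border B, ↑(ρ ω).support ⊆ B)
    (p : MvPolynomial (Fin n) K) :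
    piF B (border B) ρ p ∈ spanMon K B := by
  rw [spanMon_eq_restrictSupport]
  refine Submodule.sum_mem _ fun m _ => ?_
  split_ifs with hB hH
  · exact (monomial_mem_restrictSupport K).mpr (.inl hB)
  · exact Submodule.smul_mem _ _ ((mem_restrictSupport_iff K).mpr (hρ m hH))
  · exact Submodule.zero_mem _

lemma piF_monomial_of_mem {t : Mon n} (ht : t ∈ B) :
    piF B H ρ (monomial t 1) = monomial t 1 := by
  simp [piF, support_monomial, ht]

lemma piF_monomial_of_notMem {t : Mon n} (htB : t ∉ B) (htH : t ∈ H) :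
    piF B H ρ (monomial t 1) = ρ t := by
  simp [piF, support_monomial, htB, htH]

lemma muF_apply (i : Fin n) (q : MvPolynomial (Fin n) K) (ω : Mon n) :
    muF B i q ω = if ω ∈ border B then C ((X i * q).coeff ω) else 0 := by
  rw [muF, Finset.sum_apply', Finset.sum_eq_single ω (fun b _ hb => ?_) (fun hω => ?_)]
  · split_ifs <;> simp
  · split_ifs <;> simp [hb]
  · rw [notMem_support_iff] at hω
    split_ifs <;> simp [hω]

lemma muF_add (i : Fin n) (p q : MvPolynomial (Fin n) K) :
    muF B i (p + q) = muF B i p + muF B i q := by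
  ext ω
  simp only [muF_apply, Finsupp.add_apply, mul_add, coeff_add, map_add]
  split_ifs <;> simp

lemma muF_smul (i : Fin n) (c : K) (q : MvPolynomial (Fin n) K) :
    muF B i (c • q) = c • muF B i q := by
  ext ω
  simp only [muF_apply, Finsupp.smul_apply, mul_smul_comm, coeff_smul]
  split_ifs <;> simp

lemma totalDegree_muF_apply (i : Fin n) (q : MvPolynomial (Fin n) K) (ω : Mon n) :
    (muF B i q ω).totalDegree = 0 := by
  rw [muF_apply]
  split_ifs <;> simp

lemma muF_apply_of_notMem_border (i : Fin n) (q : MvPolynomial (Fin n) K) {ω : Mon n}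
    (hω : ω ∉ border B) : muF B i q ω = 0 := by
  rw [muF_apply, if_neg hω]

lemma muF_monomial_of_mem (i : Fin n) {b : Mon n} (hb : Finsupp.single i 1 + b ∈ B) :
    muF B i (monomial b (1 : K)) = 0 := by
  ext ω
  rw [muF_apply, X_mul_monomial_one, coeff_monomial]
  split_ifs with hω h <;> simp_all [border]

lemma muF_monomial_of_mem_border (i : Fin n) {b : Mon n}
    (hb : Finsupp.single i 1 + b ∈ border B) :
    muF B i (monomial b (1 : K)) = Finsupp.single (Finsupp.single i 1 + b) 1 := by
  ext ω
  rw [muF_apply, X_mul_monomial_one, coeff_monomial, Finsupp.single_apply]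
  split_ifs with hω h <;> simp_all

def MulOpsCommute : Prop :=
  ∀ b ∈ spanMon K B, ∀ i j : Fin n,
    piF B (border B) ρ (X i * piF B (border B) ρ (X j * b)) =
      piF B (border B) ρ (X j * piF B (border B) ρ (X i * b))

noncomputable def commSyz (i j : Fin n) (r : MvPolynomial (Fin n) K) :
    Mon n →₀ MvPolynomial (Fin n) K :=
  (X i : MvPolynomial (Fin n) K) • muF B j r + muF B i (piF B (border B) ρ (X j * r))
    - (X j : MvPolynomial (Fin n) K) • muF B i r - muF B j (piF B (border B) ρ (X i * r))

lemma commSyz_add (i j : Fin n) (r s : MvPolynomial (Fin n) K) :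
    commSyz B ρ i j (r + s) = commSyz B ρ i j r + commSyz B ρ i j s := by
  simp only [commSyz, mul_add, piF_add, muF_add, smul_add]
  abel

lemma commSyz_smul (i j : Fin n) (c : K) (r : MvPolynomial (Fin n) K) :
    commSyz B ρ i j (c • r) = c • commSyz B ρ i j r := by
  simp only [commSyz, mul_smul_comm, piF_smul, muF_smul, smul_sub, smul_add, smul_comm c]

lemma commSyz_mem_span_XiGen (i j : Fin n) {r : MvPolynomial (Fin n) K} (hr : r ∈ spanMon K B) :
    commSyz B ρ i j r ∈ Submodule.span (MvPolynomial (Fin n) K) (XiGen B ρ) := by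
  induction hr using Submodule.span_induction with
  | mem x hx =>
    obtain ⟨m, hm, rfl⟩ := hx
    exact Submodule.subset_span ⟨m, hm, i, j, rfl⟩
  | zero => simp [commSyz, muF, piF]
  | add x y _ _ hx hy => exact commSyz_add B ρ i j x y ▸ Submodule.add_mem _ hx hy
  | smul c x _ hx => exact commSyz_smul B ρ i j c x ▸ Submodule.smul_of_tower_mem _ c hx

-- `x^L q = redWord q L + ∑ ω, syzWord q L ω * f_ω`, the last letter of `L` applied first.
noncomputable def redWord (q : MvPolynomial (Fin n) K) : List (Fin n) → MvPolynomial (Fin n) K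
  | [] => q
  | i :: L => piF B (border B) ρ (X i * redWord q L)

noncomputable def syzWord (q : MvPolynomial (Fin n) K) :
    List (Fin n) → Mon n →₀ MvPolynomial (Fin n) K
  | [] => 0
  | i :: L => muF B i (redWord B ρ q L) + (X i : MvPolynomial (Fin n) K) • syzWord q L

lemma redWord_mem_spanMon (hρ : ∀ ω ∈ border B, ↑(ρ ω).support ⊆ B)
    {q : MvPolynomial (Fin n) K} (hq : q ∈ spanMon K B) :
    ∀ L : List (Fin n), redWord B ρ q L ∈ spanMon K B
  | [] => hq
  | _ :: _ => piF_mem_spanMon B ρ hρ _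

lemma redWord_append (q : MvPolynomial (Fin n) K) (M N : List (Fin n)) :
    redWord B ρ q (M ++ N) = redWord B ρ (redWord B ρ q N) M := by
  induction M with
  | nil => rfl
  | cons i M ih => rw [List.cons_append, redWord, redWord, ih]

lemma syzWord_append (q : MvPolynomial (Fin n) K) (M N : List (Fin n)) :
    syzWord B ρ q (M ++ N) =
      syzWord B ρ (redWord B ρ q N) M +
        (monomial (varsSum M) 1 : MvPolynomial (Fin n) K) • syzWord B ρ q N := by
  induction M with
  | nil => simp [syzWord, varsSum]
  | cons i M ih =>
    rw [List.cons_append, syzWord, syzWord, ih, ← redWord_append, smul_add, smul_smul,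
      varsSum_cons, X_mul_monomial_one, add_assoc]

lemma syzWord_apply_of_notMem_border (q : MvPolynomial (Fin n) K) {ω : Mon n}
    (hω : ω ∉ border B) :
    ∀ L : List (Fin n), syzWord B ρ q L ω = 0
  | [] => rfl
  | i :: L => by
    rw [syzWord, Finsupp.add_apply, Finsupp.smul_apply, muF_apply_of_notMem_border B i _ hω,
      syzWord_apply_of_notMem_border q hω L, smul_zero, add_zero]

lemma totalDegree_syzWord_apply_lt (q : MvPolynomial (Fin n) K) (ω : Mon n) :
    ∀ L : List (Fin n), syzWord B ρ q L ω ≠ 0 → (syzWord B ρ q L ω).totalDegree < L.length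
  | [], h => absurd rfl h
  | i :: L, _ => by
    rw [syzWord, Finsupp.add_apply, Finsupp.smul_apply, smul_eq_mul, List.length_cons]
    refine (totalDegree_add _ _).trans_lt (max_lt ?_ ?_)
    · rw [totalDegree_muF_apply]
      omega
    · by_cases h : syzWord B ρ q L ω = 0
      · simp [h]
      · have := totalDegree_syzWord_apply_lt q ω L h
        calc (X i * syzWord B ρ q L ω).totalDegree
            ≤ (X i : MvPolynomial (Fin n) K).totalDegree + (syzWord B ρ q L ω).totalDegree :=
              totalDegree_mul _ _
          _ < L.length + 1 := by rw [totalDegree_X]; omega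

lemma redWord_eq_of_perm (hρ : ∀ ω ∈ border B, ↑(ρ ω).support ⊆ B)
    (hcomm : MulOpsCommute B ρ) {q : MvPolynomial (Fin n) K} (hq : q ∈ spanMon K B)
    {L L' : List (Fin n)} (h : L.Perm L') :
    redWord B ρ q L = redWord B ρ q L' := by
  induction h with
  | nil => rfl
  | cons i _ ih => rw [redWord, redWord, ih]
  | swap i j L => exact hcomm _ (redWord_mem_spanMon B ρ hρ hq L) j i
  | trans _ _ ih₁ ih₂ => exact ih₁.trans ih₂

lemma syzWord_sub_mem_of_perm (hρ : ∀ ω ∈ border B, ↑(ρ ω).support ⊆ B)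
    (hcomm : MulOpsCommute B ρ) {q : MvPolynomial (Fin n) K} (hq : q ∈ spanMon K B)
    {L L' : List (Fin n)} (h : L.Perm L') :
    syzWord B ρ q L - syzWord B ρ q L' ∈
      Submodule.span (MvPolynomial (Fin n) K) (XiGen B ρ) := by
  induction h with
  | nil => simp
  | cons i h ih =>
    rw [syzWord, syzWord, redWord_eq_of_perm B ρ hρ hcomm hq h, add_sub_add_left_eq_sub,
      ← smul_sub]
    exact Submodule.smul_mem _ _ ih
  | swap i j L =>
    have hswap : syzWord B ρ q (j :: i :: L) - syzWord B ρ q (i :: j :: L) =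
        commSyz B ρ j i (redWord B ρ q L) := by
      simp only [syzWord, redWord, commSyz, smul_add, smul_smul, mul_comm (X j) (X i)]
      abel
    rw [hswap]
    exact commSyz_mem_span_XiGen B ρ j i (redWord_mem_spanMon B ρ hρ hq L)
  | trans _ _ ih₁ ih₂ => simpa using Submodule.add_mem _ ih₁ ih₂

lemma redWord_one_of_suffixes :
    ∀ L : List (Fin n), (∀ L', L' <:+ L → varsSum L' ∈ B) →
      redWord B ρ 1 L = monomial (varsSum L) 1
  | [], _ => by simp [redWord, varsSum]
  | i :: L, h => by
    rw [redWord, redWord_one_of_suffixes L fun L' hL' => h L' (hL'.trans (List.suffix_cons i L)),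
      X_mul_monomial_one, ← varsSum_cons, piF_monomial_of_mem B _ ρ (h _ List.suffix_rfl)]

lemma syzWord_one_of_suffixes :
    ∀ L : List (Fin n), (∀ L', L' <:+ L → varsSum L' ∈ B) → syzWord B ρ 1 L = 0
  | [], _ => rfl
  | i :: L, h => by
    have hL : ∀ L', L' <:+ L → varsSum L' ∈ B :=
      fun L' hL' => h L' (hL'.trans (List.suffix_cons i L))
    have hiL : Finsupp.single i 1 + varsSum L ∈ B := varsSum_cons i L ▸ h _ List.suffix_rfl
    rw [syzWord, redWord_one_of_suffixes B ρ L hL, syzWord_one_of_suffixes L hL, smul_zero,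
      add_zero, muF_monomial_of_mem B i hiL]

lemma exists_word_of_mem_border (hB : ConnectedTo1 B) {θ : Mon n} (hθ : θ ∈ border B) :
    ∃ L : List (Fin n), varsSum L = θ ∧ redWord B ρ 1 L = ρ θ ∧
      syzWord B ρ 1 L = Finsupp.single θ 1 := by
  have hθ' : ∃ j, ∃ b ∈ B, Finsupp.single j 1 + b = θ := by
    simpa [prolong, hθ.2] using hθ.1
  obtain ⟨j, b, hb, rfl⟩ := hθ'
  obtain ⟨L₀, hL₀, hprefix⟩ := hB.2 b hb
  have hsuffix : ∀ L', L' <:+ L₀.reverse → varsSum L' ∈ B := fun L' hL' => by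
    simpa [varsSum_reverse] using hprefix L'.reverse (by simpa using List.reverse_prefix.mpr hL')
  have hred := redWord_one_of_suffixes B ρ _ hsuffix
  rw [varsSum_reverse, hL₀] at hred
  refine ⟨j :: L₀.reverse, by rw [varsSum_cons, varsSum_reverse, hL₀], ?_, ?_⟩
  · rw [redWord, hred, X_mul_monomial_one, piF_monomial_of_notMem _ _ _ hθ.2 hθ]
  · rw [syzWord, syzWord_one_of_suffixes B ρ _ hsuffix, smul_zero, add_zero, hred,
      muF_monomial_of_mem_border B j hθ]

lemma exists_word_syzWord_eq (hB : ConnectedTo1 B) {θ : Mon n} (hθ : θ ∈ border B)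
    (m : Mon n) :
    ∃ L : List (Fin n), varsSum L = m + θ ∧ ∃ R : Mon n →₀ MvPolynomial (Fin n) K,
      (∀ ω, R ω ≠ 0 → ω ∈ border B ∧ (R ω).totalDegree < degSum m) ∧
      syzWord B ρ 1 L = R + Finsupp.single θ (monomial m 1) := by
  obtain ⟨Lθ, hLθ, hred, hsyz⟩ := exists_word_of_mem_border B ρ hB hθ
  obtain ⟨Lm, hLm, hlen⟩ := exists_varsSum_eq m
  refine ⟨Lm ++ Lθ, by rw [varsSum_append, hLm, hLθ], syzWord B ρ (ρ θ) Lm,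
    fun ω hω => ⟨?_, ?_⟩, ?_⟩
  · by_contra h
    exact hω (syzWord_apply_of_notMem_border B ρ _ h Lm)
  · exact hlen ▸ totalDegree_syzWord_apply_lt B ρ _ ω Lm hω
  · rw [syzWord_append, hred, hsyz, hLm, Finsupp.smul_single, smul_eq_mul, mul_one]

end BorderBasis

/-- if m·θ = m'·θ' with θ, θ' ∈ ∂B, then m·e_θ ≡ m'·e_{θ'} + Σ p_ω e_ω
    modulo the module Ξ of commutation syzygies, with deg p_ω < max(|m|,|m'|). -/
theorem stmt13 {n : ℕ} {K : Type} [Field K] (B : Set (Mon n))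
    (ρ : Mon n → MvPolynomial (Fin n) K)
    (hB : ConnectedTo1 B)
    (hρ : ∀ ω ∈ border B, ↑(ρ ω).support ⊆ B)
    (hcomm : ∀ b ∈ spanMon K B, ∀ i j : Fin n,
      piF B (border B) ρ (X i * piF B (border B) ρ (X j * b)) =
      piF B (border B) ρ (X j * piF B (border B) ρ (X i * b))) :
    ∀ m m' θ θ' : Mon n, θ ∈ border B → θ' ∈ border B → m + θ = m' + θ' →
      ∃ p : Mon n →₀ MvPolynomial (Fin n) K,
        ↑p.support ⊆ border B ∧
        (∀ ω ∈ p.support, (p ω).totalDegree < max (degSum m) (degSum m')) ∧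
        Finsupp.single θ ((monomial m (1 : K) : MvPolynomial (Fin n) K)) -
            (Finsupp.single θ' ((monomial m' (1 : K) : MvPolynomial (Fin n) K)) + p) ∈
          Submodule.span (MvPolynomial (Fin n) K) (XiGen B ρ) := by
  intro m m' θ θ' hθ hθ' hmθ
  obtain ⟨L, hL, R, hR, hsyz⟩ := exists_word_syzWord_eq B ρ hB hθ m
  obtain ⟨L', hL', R', hR', hsyz'⟩ := exists_word_syzWord_eq B ρ hB hθ' m'
  have hperm : L.Perm L' := .of_varsSum_eq (by rw [hL, hL', hmθ])
  refine ⟨R' - R, fun ω hω => ?_, fun ω hω => ?_, ?_⟩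
  · rcases Finset.mem_union.mp (Finsupp.support_sub hω) with h | h
    exacts [(hR' ω (Finsupp.mem_support_iff.mp h)).1, (hR ω (Finsupp.mem_support_iff.mp h)).1]
  · exact totalDegree_sub_lt (fun h => lt_max_of_lt_right (hR' ω h).2)
      (fun h => lt_max_of_lt_left (hR ω h).2) (Finsupp.mem_support_iff.mp hω)
  · have hΞ := syzWord_sub_mem_of_perm B ρ hρ hcomm (one_mem_spanMon hB.1) hperm
    rw [hsyz, hsyz'] at hΞ
    convert hΞ using 1
    abel
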